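/- arXiv:math/9712244 — 7 statements merged into one kernel-verified Lean document; each statement's English description precedes it below -/
import Mathlib

section
/- For positive integers N, m with 1 ≤ N, the determinant of the N×N matrix whose (i,j)-entry is the binomial coefficient C(m+i, m-i+j) equals ∏_{i=1}^{N} (N+m-i+1)! · (i-1)! · (2m+i+1)_{i-1} / ((m+i-1)! · (2N-2i+1)!), where (a)_k denotes the shifted factorial a(a+1)···(a+k-1). -/
/-!
Write the entry as `C(m+i+1, m+j-i) = c_i · p_j(i+1)` (0-indexed), where `c_i` depends only on
the row and `p_j(x) = ∏_{t<j} (2x-1-t) · ∏_{j<t<N} (m+1+t-x)` has degree `N-1`.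
Then `det (p_j(x_i))` is the Vandermonde determinant of the `x_i` times a determinant that does
not depend on them, so it is unchanged when every `x_i` is shifted by `m`. At the shifted points
`x_i = m+1+i` the factor `t = i` kills `p_j(x_i)` for `j < i`, so the matrix is upper triangular,
and its diagonal `p_i(m+1+i) = (2m+i+2)_i · (N-1-i)!` gives the product formula.
-/

/-- The shifted factorial (Pochhammer symbol) `(x)_k = x(x+1)⋯(x+k-1)`. -/
def poch (x : ℚ) (k : ℕ) : ℚ := ∏ t ∈ Finset.range k, (x + t)

open Finset Matrix Polynomial Nat

section ShiftInvariance

variable {R : Type*} [CommRing R] {n : ℕ}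

theorem Matrix.eval_matrixOfPolynomials_eq_vandermonde_mul_of_natDegree_lt (v : Fin n → R)
    (p : Fin n → R[X]) (h_deg : ∀ j, (p j).natDegree < n) :
    Matrix.of (fun i j => (p j).eval (v i)) =
      vandermonde v * Matrix.of (fun (i j : Fin n) => (p j).coeff i) := by
  ext i j
  rw [mul_apply, of_apply, eval_eq_sum_range' (h_deg j), ← Fin.sum_univ_eq_sum_range]
  simp [vandermonde_apply, mul_comm]

theorem Matrix.det_eval_add_of_natDegree_lt (v : Fin n → R) (a : R) (p : Fin n → R[X])
    (h_deg : ∀ j, (p j).natDegree < n) :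
    (Matrix.of fun i j => (p j).eval (v i + a)).det =
      (Matrix.of fun i j => (p j).eval (v i)).det := by
  rw [eval_matrixOfPolynomials_eq_vandermonde_mul_of_natDegree_lt (fun i => v i + a) p h_deg,
    eval_matrixOfPolynomials_eq_vandermonde_mul_of_natDegree_lt v p h_deg, det_mul, det_mul,
    det_vandermonde_add]

end ShiftInvariance

theorem Finset.prod_range_mul_mul_reflect {M : Type*} [CommMonoid M] (h f g : ℕ → M) (N : ℕ) :
    ∏ k ∈ range N, h k * f k * g (N - 1 - k) = ∏ k ∈ range N, h k * f (N - 1 - k) * g k := by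
  simp only [prod_mul_distrib, prod_range_reflect]

theorem prod_range_natCast_add_one_add {K : Type*} [Field K] [CharZero K] (b k : ℕ) :
    ∏ s ∈ range k, ((b : K) + 1 + s) = (b + k)! / b ! := by
  rw [eq_div_iff (Nat.cast_ne_zero.2 b.factorial_ne_zero), ← Nat.factorial_mul_ascFactorial,
    ascFactorial_eq_prod_range]
  push_cast
  ring_nf

noncomputable def binomialColumnPoly (N m j : ℕ) : ℚ[X] :=
  (∏ t ∈ range j, (C 2 * X - C (1 + t : ℚ))) * ∏ t ∈ Ico (j + 1) N, (C (m + 1 + t : ℚ) - X)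

theorem natDegree_binomialColumnPoly_lt (m : ℕ) {N j : ℕ} (hj : j < N) :
    (binomialColumnPoly N m j).natDegree < N := by
  have hle : (binomialColumnPoly N m j).natDegree ≤ #(range j) • 1 + #(Ico (j + 1) N) • 1 :=
    natDegree_mul_le_of_le
      ((natDegree_prod_le _ _).trans (sum_le_card_nsmul _ _ _ fun t _ => by compute_degree))
      ((natDegree_prod_le _ _).trans (sum_le_card_nsmul _ _ _ fun t _ => by compute_degree))
  simp only [card_range, card_Ico, smul_eq_mul, mul_one] at hle
  omega

theorem eval_binomialColumnPoly (N m j : ℕ) (x : ℚ) :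
    (binomialColumnPoly N m j).eval x =
      (∏ t ∈ range j, (2 * x - 1 - t)) * ∏ t ∈ Ico (j + 1) N, ((m : ℚ) + 1 + t - x) := by
  simp [binomialColumnPoly, eval_prod, sub_sub]

def binomialRowScale (N m i : ℕ) : ℚ := (m + i + 1)! / ((2 * i + 1)! * (m + N - 1 - i)!)

theorem binomial_eq_rowScale_mul_eval_columnPoly (m : ℕ) {N i j : ℕ} (hi : i < N) (hj : j < N) :
    (if m + (j + 1) < i + 1 then 0 else ((m + (i + 1)).choose (m + (j + 1) - (i + 1)) : ℚ)) =
      binomialRowScale N m i * (binomialColumnPoly N m j).eval ((i : ℚ) + 1) := by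
  rw [eval_binomialColumnPoly]
  by_cases hlow : m + j < i
  · have hvanish : ∏ t ∈ Ico (j + 1) N, ((m : ℚ) + 1 + t - (i + 1)) = 0 :=
      prod_eq_zero (i := i - m) (by simp only [mem_Ico]; omega)
        (by push_cast [Nat.cast_sub (by omega : m ≤ i)]; ring)
    rw [if_pos (by omega), hvanish, mul_zero, mul_zero]
  rw [if_neg (by omega)]
  by_cases hhigh : 2 * i + 1 < j
  · have hvanish : ∏ t ∈ range j, (2 * ((i : ℚ) + 1) - 1 - t) = 0 :=
      prod_eq_zero (i := 2 * i + 1) (mem_range.2 hhigh) (by push_cast; ring)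
    rw [choose_eq_zero_of_lt (by omega), hvanish]
    simp
  have hdesc : ∏ t ∈ range j, (2 * ((i : ℚ) + 1) - 1 - t) = (2 * i + 1)! / (2 * i + 1 - j)! := by
    have h := prod_range_natCast_add_one_add (K := ℚ) (2 * i + 1 - j) j
    rw [Nat.sub_add_cancel (by omega)] at h
    rw [← h, ← prod_range_reflect]
    refine prod_congr rfl fun t ht => ?_
    rw [mem_range] at ht
    rw [Nat.cast_sub (by omega), Nat.cast_sub (by omega), Nat.cast_sub (by omega)]
    push_cast
    ring
  have hasc :
      ∏ t ∈ Ico (j + 1) N, ((m : ℚ) + 1 + t - (i + 1)) = (m + N - 1 - i)! / (m + j - i)! := by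
    have h := prod_range_natCast_add_one_add (K := ℚ) (m + j - i) (N - (j + 1))
    rw [show m + j - i + (N - (j + 1)) = m + N - 1 - i by omega] at h
    rw [← h, prod_Ico_eq_prod_range]
    refine prod_congr rfl fun t _ => ?_
    rw [Nat.cast_sub (by omega)]
    push_cast
    ring
  rw [show m + (j + 1) - (i + 1) = m + j - i by omega, show m + (i + 1) = m + i + 1 by ring,
    Nat.cast_choose ℚ (by omega), show m + i + 1 - (m + j - i) = 2 * i + 1 - j by omega,
    hdesc, hasc, binomialRowScale]
  field_simp

theorem eval_binomialColumnPoly_add_of_lt (m : ℕ) {N i j : ℕ} (hji : j < i) (hi : i < N) :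
    (binomialColumnPoly N m j).eval ((i : ℚ) + 1 + m) = 0 := by
  rw [eval_binomialColumnPoly]
  exact mul_eq_zero_of_right _ (prod_eq_zero (i := i) (by simp only [mem_Ico]; omega) (by ring))

theorem eval_binomialColumnPoly_add_self (N m i : ℕ) :
    (binomialColumnPoly N m i).eval ((i : ℚ) + 1 + m) =
      poch (2 * m + i + 2 : ℕ) i * (N - (i + 1))! := by
  rw [eval_binomialColumnPoly, poch, prod_Ico_eq_prod_range, ← prod_range_reflect,
    ← prod_range_add_one_eq_factorial]
  push_cast
  congr 1
  · refine prod_congr rfl fun t ht => ?_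
    rw [mem_range] at ht
    rw [Nat.cast_sub (by omega), Nat.cast_sub (by omega)]
    push_cast
    ring
  · exact prod_congr rfl fun t _ => by ring

theorem prod_binomialRowScale_mul (N m : ℕ) :
    ∏ i ∈ range N, binomialRowScale N m i * (poch (2 * m + i + 2 : ℕ) i * (N - (i + 1))!) =
      ∏ i ∈ Icc 1 N, ((N + m - i + 1)! : ℚ) * ((i - 1)! : ℚ) *
        poch ((2 * m + i + 1 : ℕ) : ℚ) (i - 1) /
          (((m + i - 1)! : ℚ) * ((2 * N - 2 * i + 1)! : ℚ)) := by
  rw [← Ico_add_one_right_eq_Icc, prod_Ico_eq_prod_range, Nat.add_sub_cancel]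
  set f : ℕ → ℚ := fun k => (m + k + 1)! / (2 * k + 1)!
  set g : ℕ → ℚ := fun k => k ! / (m + k)!
  calc _ = ∏ k ∈ range N, poch (2 * m + k + 2 : ℕ) k * f k * g (N - 1 - k) := by
        refine prod_congr rfl fun k hk => ?_
        rw [mem_range] at hk
        rw [binomialRowScale, show m + N - 1 - k = m + (N - 1 - k) by omega,
          show N - (k + 1) = N - 1 - k by omega]
        ring
    _ = ∏ k ∈ range N, poch (2 * m + k + 2 : ℕ) k * f (N - 1 - k) * g k :=
        prod_range_mul_mul_reflect _ _ _ N
    _ = _ := by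
        refine prod_congr rfl fun k hk => ?_
        rw [mem_range] at hk
        rw [show N + m - (1 + k) + 1 = m + (N - 1 - k) + 1 by omega,
          show 2 * N - 2 * (1 + k) + 1 = 2 * (N - 1 - k) + 1 by omega,
          show m + (1 + k) - 1 = m + k by omega, show 2 * m + (1 + k) + 1 = 2 * m + k + 2 by omega,
          Nat.add_sub_cancel_left]
        ring

theorem det_binomial_simple_part_general (N m : ℕ) :
    Matrix.det (Matrix.of fun i j : Fin N =>
      (if m + (j.1 + 1) < i.1 + 1 then 0
       else ((m + (i.1 + 1)).choose (m + (j.1 + 1) - (i.1 + 1)) : ℚ))) =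
    ∏ i ∈ Finset.Icc 1 N,
      ((N + m - i + 1).factorial : ℚ) * ((i - 1).factorial : ℚ) *
          poch ((2 * m + i + 1 : ℕ) : ℚ) (i - 1) /
        (((m + i - 1).factorial : ℚ) * ((2 * N - 2 * i + 1).factorial : ℚ)) := by
  have htriangular : (Matrix.of fun i j : Fin N =>
      (binomialColumnPoly N m j).eval ((i : ℚ) + 1 + m)).IsUpperTriangular :=
    fun i j hji => eval_binomialColumnPoly_add_of_lt m hji i.isLt
  calc _ = (∏ i : Fin N, binomialRowScale N m i) *
        (Matrix.of fun i j : Fin N => (binomialColumnPoly N m j).eval ((i : ℚ) + 1)).det := by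
        rw [← det_mul_column]
        congr with i j
        exact binomial_eq_rowScale_mul_eval_columnPoly m i.isLt j.isLt
    _ = (∏ i : Fin N, binomialRowScale N m i) *
        (Matrix.of fun i j : Fin N => (binomialColumnPoly N m j).eval ((i : ℚ) + 1 + m)).det := by
        rw [det_eval_add_of_natDegree_lt (fun i : Fin N => (i : ℚ) + 1) (m : ℚ) _
          fun j => natDegree_binomialColumnPoly_lt m j.isLt]
    _ = (∏ i : Fin N, binomialRowScale N m i) *
        ∏ i : Fin N, poch (2 * m + i + 2 : ℕ) i * (N - (i + 1))! := by
        rw [det_of_isUpperTriangular htriangular]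
        simp only [of_apply, eval_binomialColumnPoly_add_self]
    _ = _ := by
        rw [Fin.prod_univ_eq_prod_range (binomialRowScale N m),
          Fin.prod_univ_eq_prod_range (fun i => poch (2 * m + i + 2 : ℕ) i * (N - (i + 1))!),
          ← prod_mul_distrib, prod_binomialRowScale_mul]

/-- `det_{1≤i,j≤N} C(m+i, m-i+j) = ∏_{i=1}^{N} (N+m-i+1)!(i-1)!(2m+i+1)_{i-1}
/ ((m+i-1)!(2N-2i+1)!)`, where the binomial coefficient is `0` for a negative
lower index. -/
theorem det_binomial_simple_part (N m : ℕ) (hN : 1 ≤ N) (hm : 0 < m) :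
    Matrix.det (Matrix.of fun i j : Fin N =>
      (if m + (j.1 + 1) < i.1 + 1 then 0
       else ((m + (i.1 + 1)).choose (m + (j.1 + 1) - (i.1 + 1)) : ℚ))) =
    ∏ i ∈ Finset.Icc 1 N,
      ((N + m - i + 1).factorial : ℚ) * ((i - 1).factorial : ℚ) *
          poch ((2 * m + i + 1 : ℕ) : ℚ) (i - 1) /
        (((m + i - 1).factorial : ℚ) * ((2 * N - 2 * i + 1).factorial : ℚ)) :=
  det_binomial_simple_part_general N m
end

section
/- Let X_1,…,X_n, A_2,…,A_n, B_2,…,B_n be elements of a commutative ring. Then det_{1≤i,j≤n} ( (X_i+A_n)(X_i+A_{n-1})···(X_i+A_{j+1}) · (X_i+B_j)(X_i+B_{j-1})···(X_i+B_2) ) = ∏_{1≤i<j≤n} (X_i−X_j) · ∏_{2≤i≤j≤n} (B_i−A_j). -/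
/-!
Subtracting column `j + 1` from column `j` (for all `j` at once) leaves the determinant
unchanged, and since the two columns share all but one factor, column `j` becomes
`A_{j+1} - B_{j+1}` times the same product with the factor `X_i + A_{j+1}` removed.
Repeating this, round `r` removes `X_i + A_{j+r}` from column `j`, until only the monic
polynomial `∏_{k=2}^{j} (x + B_k)` of degree `j - 1` evaluated at `X_i` is left, whose
determinant is the Vandermonde determinant.
-/

open Finset Matrix

section Determinants

variable {R : Type*} [CommRing R]

theorem Matrix.det_of_sub_mul_succ_col {n : ℕ} (f : Fin n → ℕ → R) (d : ℕ → R)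
    (hd : d (n - 1) = 0) :
    det (of fun i (j : Fin n) => f i j - d j * f i (j + 1)) =
      det (of fun i (j : Fin n) => f i j) := by
  set U : Matrix (Fin n) (Fin n) R :=
    of fun a b => if a = b then 1 else if a.1 = b.1 + 1 then -d b else 0
  have hU : U.det = 1 := by
    have hlower : U.IsLowerTriangular := fun a b hab => by
      have : a.1 < b.1 := hab
      simp only [U, of_apply]
      rw [if_neg (by omega), if_neg (by omega)]
    simp [det_of_isLowerTriangular U hlower, U]
  have hmul : (of fun i (j : Fin n) => f i j) * U =
      of fun i (j : Fin n) => f i j - d j * f i (j + 1) := by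
    ext i j
    have hterm : ∀ a : Fin n, f i a * U a j =
        (if a = j then f i j else 0) + if a.1 = j.1 + 1 then -(d j * f i (j + 1)) else 0 := by
      intro a
      by_cases haj : a = j
      · subst haj; simp [U]
      · by_cases hsucc : a.1 = j.1 + 1 <;> simp [U, haj, hsucc, mul_comm]
    simp only [mul_apply, of_apply]
    rw [sum_congr rfl fun a _ => hterm a, sum_add_distrib, sum_ite_eq']
    by_cases hj : j.1 + 1 < n
    · have hsucc : ∀ a : Fin n, a.1 = j.1 + 1 ↔ a = ⟨j.1 + 1, hj⟩ := fun a => by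
        rw [Fin.ext_iff]
      simp only [hsucc, sum_ite_eq', mem_univ, if_true]
      ring
    · have hdj : d j = 0 := by rw [← hd]; congr 1; omega
      simp [hdj, sub_eq_add_neg]
  rw [← hmul, det_mul, hU, mul_one]

open Polynomial in
theorem Matrix.det_of_prod_add_eq_det_vandermonde {ι : Type*} {n : ℕ} (v : Fin n → R)
    (b : ι → R) (s : Fin n → Finset ι) (hs : ∀ j, #(s j) = j) :
    det (of fun i j => ∏ k ∈ s j, (v i + b k)) = det (vandermonde v) := by
  nontriviality R
  have hmonic : ∀ j, (∏ k ∈ s j, (X + C (b k))).Monic :=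
    fun j => monic_prod_of_monic _ _ fun k _ => monic_X_add_C _
  have hdeg : ∀ j : Fin n, (∏ k ∈ s j, (X + C (b k))).natDegree = (j : ℕ) := fun j => by
    rw [natDegree_prod_of_monic _ _ fun k _ => monic_X_add_C _]
    simp [hs]
  rw [det_eval_matrixOfPolynomials_eq_det_vandermonde v _ hdeg hmonic]
  simp [eval_prod]

end Determinants

section Reindexing

variable {M : Type*} [CommMonoid M] {n : ℕ}

theorem prod_fin_Ioi_eq_prod_range_Ioo (F : ℕ → ℕ → M) :
    ∏ i : Fin n, ∏ j ∈ Ioi i, F i j = ∏ i ∈ range n, ∏ j ∈ Ioo i n, F i j := by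
  rw [← Fin.prod_univ_eq_prod_range]
  refine prod_congr rfl fun i _ => ?_
  rw [← Fin.map_valEmbedding_Ioi, prod_map]
  rfl

theorem prod_range_prod_range_ite_eq_prod_range_Ioo (H : ℕ → ℕ → M) :
    ∏ r ∈ range n, ∏ c ∈ range n, (if c + r + 1 < n then H c (c + r + 1) else 1) =
      ∏ i ∈ range n, ∏ j ∈ Ioo i n, H i j := by
  rw [prod_comm]
  refine prod_congr rfl fun i hi => ?_
  rw [prod_ite, prod_const_one, mul_one]
  refine prod_nbij' (fun r => i + r + 1) (fun j => j - i - 1) ?_ ?_ ?_ ?_ ?_ <;>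
    intros <;> simp_all <;> omega

theorem prod_Icc_Icc_succ_eq_prod_range_Ioo (F : ℕ → ℕ → M) :
    ∏ i ∈ Icc 1 n, ∏ j ∈ Icc (i + 1) n, F i j =
      ∏ i ∈ range n, ∏ j ∈ Ioo i n, F (i + 1) (j + 1) := by
  rw [prod_sigma', prod_sigma']
  refine prod_nbij' (fun p => ⟨p.1 - 1, p.2 - 1⟩) (fun p => ⟨p.1 + 1, p.2 + 1⟩)
    ?_ ?_ ?_ ?_ ?_ <;> rintro ⟨i, j⟩ <;> simp <;> intros <;> first | omega | congr 1 <;> omega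

theorem prod_Icc_Icc_eq_prod_range_Ioo (G : ℕ → ℕ → M) :
    ∏ i ∈ Icc 2 n, ∏ j ∈ Icc i n, G i j =
      ∏ i ∈ range n, ∏ j ∈ Ioo i n, G (i + 2) (j + 1) := by
  rw [prod_sigma', prod_sigma']
  refine prod_nbij' (fun p => ⟨p.1 - 2, p.2 - 1⟩) (fun p => ⟨p.1 + 2, p.2 + 1⟩)
    ?_ ?_ ?_ ?_ ?_ <;> rintro ⟨i, j⟩ <;> simp <;> intros <;> first | omega | congr 1 <;> omega

end Reindexing

namespace Krattenthaler

variable {R : Type*} [CommRing R] (A B : ℕ → R) (n : ℕ)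

/-- Column `j` after `r` rounds of column reduction: the factors `x + A_k` with
`j + 2 ≤ k ≤ j + r + 1` of the original entry have been removed. -/
def entry (r : ℕ) (x : R) (j : ℕ) : R :=
  (∏ k ∈ Icc (j + r + 2) n, (x + A k)) * ∏ k ∈ Icc 2 (j + 1), (x + B k)

theorem entry_sub_entry_succ {r j : ℕ} (h : j + r + 1 < n) (x : R) :
    entry A B n r x j - entry A B n r x (j + 1) =
      (A (j + r + 2) - B (j + 2)) * entry A B n (r + 1) x j := by
  have hA : ∏ k ∈ Icc (j + r + 2) n, (x + A k) =
      (x + A (j + r + 2)) * ∏ k ∈ Icc (j + r + 2 + 1) n, (x + A k) := by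
    rw [← mul_prod_Ioc_eq_prod_Icc (by omega), ← Icc_add_one_left_eq_Ioc]
  have hB : ∏ k ∈ Icc 2 (j + 2), (x + B k) =
      (∏ k ∈ Icc 2 (j + 1), (x + B k)) * (x + B (j + 2)) :=
    prod_Icc_succ_top (by omega) _
  simp only [entry, hA, hB, show j + 1 + r + 2 = j + r + 2 + 1 by omega,
    show j + (r + 1) + 2 = j + r + 2 + 1 by omega]
  ring

theorem entry_succ_of_le {r j : ℕ} (h : n ≤ j + r + 1) (x : R) :
    entry A B n (r + 1) x j = entry A B n r x j := by
  simp only [entry, Icc_eq_empty_of_lt (show n < j + (r + 1) + 2 by omega),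
    Icc_eq_empty_of_lt (show n < j + r + 2 by omega)]

def roundFactor (r c : ℕ) : R :=
  if c + r + 1 < n then A (c + r + 2) - B (c + 2) else 1

variable (X : ℕ → R)

def matrix (r : ℕ) : Matrix (Fin n) (Fin n) R :=
  of fun i j => entry A B n r (X (i + 1)) j

theorem det_matrix_eq_prod_mul_det_matrix_succ (r : ℕ) :
    det (matrix A B n X r) =
      (∏ c ∈ range n, roundFactor A B n r c) * det (matrix A B n X (r + 1)) := by
  let d : ℕ → R := fun j => if j + r + 1 < n then 1 else 0
  calc det (matrix A B n X r)
      = det (of fun i (j : Fin n) => entry A B n r (X (i + 1)) j -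
          d j * entry A B n r (X (i + 1)) (j + 1)) :=
        (det_of_sub_mul_succ_col _ d (if_neg (by omega))).symm
    _ = det (of fun i (j : Fin n) => roundFactor A B n r j * matrix A B n X (r + 1) i j) := by
        congr 1
        ext i j
        simp only [of_apply, matrix, d, roundFactor]
        split_ifs with h
        · rw [one_mul, entry_sub_entry_succ A B n h]
        · rw [zero_mul, sub_zero, one_mul, entry_succ_of_le A B n (by omega)]
    _ = _ := by
        rw [det_mul_row, Fin.prod_univ_eq_prod_range (roundFactor A B n r)]

theorem det_matrix_zero_eq_prod_mul_det_matrix (t : ℕ) :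
    det (matrix A B n X 0) =
      (∏ r ∈ range t, ∏ c ∈ range n, roundFactor A B n r c) * det (matrix A B n X t) := by
  induction t with
  | zero => simp
  | succ t ih => rw [ih, det_matrix_eq_prod_mul_det_matrix_succ, prod_range_succ, mul_assoc]

theorem det_matrix_self :
    det (matrix A B n X n) = det (vandermonde fun i : Fin n => X (i + 1)) := by
  have hentry : ∀ (j : ℕ) x, entry A B n n x j = ∏ k ∈ Icc 2 (j + 1), (x + B k) :=
    fun j x => by rw [entry, Icc_eq_empty_of_lt (by omega), prod_empty, one_mul]
  simp only [matrix, hentry]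
  exact det_of_prod_add_eq_det_vandermonde _ B _ fun j => by simp

end Krattenthaler

open Krattenthaler in
/-- Krattenthaler's determinant lemma:
`det_{1≤i,j≤n} ( (X_i+A_n)⋯(X_i+A_{j+1}) · (X_i+B_j)⋯(X_i+B_2) )
 = ∏_{1≤i<j≤n} (X_i−X_j) · ∏_{2≤i≤j≤n} (B_i−A_j)`. -/
theorem krattenthaler_det_lemma {R : Type*} [CommRing R] (n : ℕ)
    (X A B : ℕ → R) :
    Matrix.det (Matrix.of fun i j : Fin n =>
      (∏ k ∈ Finset.Icc (j.1 + 2) n, (X (i.1 + 1) + A k)) *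
      (∏ k ∈ Finset.Icc 2 (j.1 + 1), (X (i.1 + 1) + B k))) =
    (∏ i ∈ Finset.Icc 1 n, ∏ j ∈ Finset.Icc (i + 1) n, (X i - X j)) *
    (∏ i ∈ Finset.Icc 2 n, ∏ j ∈ Finset.Icc i n, (B i - A j)) := by
  have hfactors : ∏ r ∈ range n, ∏ c ∈ range n, roundFactor A B n r c =
      ∏ i ∈ range n, ∏ j ∈ Ioo i n, (A (j + 1) - B (i + 2)) :=
    prod_range_prod_range_ite_eq_prod_range_Ioo fun i j => A (j + 1) - B (i + 2)
  change det (matrix A B n X 0) = _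
  rw [det_matrix_zero_eq_prod_mul_det_matrix A B n X n, det_matrix_self, det_vandermonde,
    hfactors, prod_fin_Ioi_eq_prod_range_Ioo fun i j => X (j + 1) - X (i + 1),
    prod_Icc_Icc_succ_eq_prod_range_Ioo, prod_Icc_Icc_eq_prod_range_Ioo,
    ← prod_mul_distrib, ← prod_mul_distrib]
  -- the signs cancel pair by pair: `(A - B) (X_j - X_i) = (B - A) (X_i - X_j)`
  refine prod_congr rfl fun i _ => ?_
  rw [← prod_mul_distrib, ← prod_mul_distrib]
  exact prod_congr rfl fun j _ => by ring
end

section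
/- For integers i, j, m, N with 1 ≤ j ≤ N and i ≠ 0: (−1)^j ∑_{k=1}^{j} C(j−1, k−1) · (m+i−k+1)_{k−1} · (N+k−2i+2)_{N−k} · (N+2m−k+1)/2 = (−N−m+i−j+1)_{j−1} · (N+j−2i+2)_{N−j} · (−2m−N−j+1)/2, as an identity of polynomials in m. -/
open Polynomial

/-- The shifted factorial `(p)_k = p(p+1)⋯(p+k-1)` of a polynomial. -/
noncomputable def pochP (p : ℚ[X]) (k : ℕ) : ℚ[X] :=
  ∏ t ∈ Finset.range k, (p + (t : ℚ[X]))

section RowAuxSection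
open Finset

namespace RowAux

/-- rising factorial -/
def rp (a : ℚ) (k : ℕ) : ℚ := ∏ t ∈ Finset.range k, (a + t)
/-- falling factorial -/
def ff (a : ℚ) (k : ℕ) : ℚ := ∏ t ∈ Finset.range k, (a - t)

lemma ff_zero (a : ℚ) : ff a 0 = 1 := rfl

lemma rp_zero (a : ℚ) : rp a 0 = 1 := rfl

lemma ff_succ (a : ℚ) (n : ℕ) : ff a (n+1) = ff a n * (a - n) :=
  Finset.prod_range_succ _ _

lemma ff_succ' (a : ℚ) (n : ℕ) : ff a (n+1) = a * ff (a-1) n := by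
  rw [ff, Finset.prod_range_succ', mul_comm]
  simp only [Nat.cast_zero, sub_zero]
  congr 1
  refine Finset.prod_congr rfl fun t _ => ?_
  push_cast; ring

lemma rp_eq_ff (a : ℚ) (n : ℕ) : rp a n = ff (a + n - 1) n := by
  rw [rp, ff, ← Finset.prod_range_reflect]
  refine Finset.prod_congr rfl fun t ht => ?_
  have h1 : t < n := Finset.mem_range.mp ht
  have : ((n - 1 - t : ℕ) : ℚ) = (n : ℚ) - 1 - t := by
    have : n - 1 - t = n - (1 + t) := by omega
    rw [this, Nat.cast_sub (by omega)]
    push_cast; ring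
  rw [this]; ring

lemma rp_add (a : ℚ) (p q : ℕ) : rp a (p+q) = rp a p * rp (a+p) q := by
  rw [rp, Finset.prod_range_add]
  congr 1
  refine Finset.prod_congr rfl fun t _ => ?_
  push_cast; ring

lemma rp_neg (a : ℚ) (n : ℕ) : rp (-a) n = (-1)^n * ff a n := by
  induction n with
  | zero => simp [rp, ff]
  | succ n ih =>
    rw [rp, Finset.prod_range_succ, ← rp, ih, ff_succ, pow_succ]
    ring

lemma vdm (n : ℕ) (x z : ℚ) :
    ∑ r ∈ Finset.range (n+1), (n.choose r : ℚ) * ff x r * ff z (n-r)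
      = ff (x+z) n := by
  induction n with
  | zero => simp [ff]
  | succ n ih =>
    rw [Finset.sum_range_succ']
    simp only [Nat.choose_zero_right, Nat.cast_one, one_mul, Nat.sub_zero, ff_zero]
    have key : ∀ r ∈ Finset.range (n+1),
        ((n+1).choose (r+1) : ℚ) * ff x (r+1) * ff z (n+1-(r+1))
        = (n.choose r : ℚ) * ff x r * ff z (n-r) * (x - r)
          + (n.choose (r+1) : ℚ) * ff x (r+1) * ff z (n-r) := by
      intro r hr
      have : n+1-(r+1) = n - r := by omega
      rw [this, Nat.choose_succ_succ, ff_succ]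
      push_cast; ring
    rw [Finset.sum_congr rfl key, Finset.sum_add_distrib]
    have hBlast : ((n.choose (n+1):ℚ) * ff x (n+1) * ff z (n-n)) = 0 := by
      simp [Nat.choose_succ_self]
    rw [Finset.sum_range_succ
      (fun r => (n.choose (r+1):ℚ) * ff x (r+1) * ff z (n-r)), hBlast, add_zero]
    have hD : ∑ r ∈ Finset.range n, (n.choose (r+1):ℚ) * ff x (r+1) * ff z (n-r)
        + ff z (n+1)
        = ∑ r ∈ Finset.range (n+1), (n.choose r : ℚ) * ff x r * ff z ((n-r)+1) := by
      rw [Finset.sum_range_succ'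
        (fun r => (n.choose r : ℚ) * ff x r * ff z ((n-r)+1))]
      simp only [Nat.choose_zero_right, Nat.cast_one, one_mul, Nat.sub_zero, ff_zero,
        mul_one]
      congr 1
      refine Finset.sum_congr rfl fun r hr => ?_
      have : (n - (r+1)) + 1 = n - r := by
        have := Finset.mem_range.mp hr; omega
      rw [this]
    rw [add_assoc, hD, ← Finset.sum_add_distrib]
    have key2 : ∀ r ∈ Finset.range (n+1),
        (n.choose r : ℚ) * ff x r * ff z (n-r) * (x - r)
          + (n.choose r : ℚ) * ff x r * ff z ((n-r)+1)
        = (n.choose r : ℚ) * ff x r * ff z (n-r) * (x + z - n) := by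
      intro r hr
      have hrn : ((n - r : ℕ) : ℚ) = (n : ℚ) - r := by
        have := Finset.mem_range.mp hr
        rw [Nat.cast_sub (by omega)]
      rw [ff_succ, hrn]; ring
    rw [Finset.sum_congr rfl key2, ← Finset.sum_mul, ih, ff_succ]

end RowAux

namespace RowAux

lemma core (n : ℕ) (x c : ℚ) :
    ∑ r ∈ Finset.range (n+1),
        (n.choose r : ℚ) * ff x r * rp (c+r+2) (n-r) * (2*x+c+1-r)
      = ff (x+c+n) n * (2*x+c+n+1) := by
  have key : ∀ r ∈ Finset.range (n+1),
      (n.choose r : ℚ) * ff x r * rp (c+r+2) (n-r) * (2*x+c+1-r)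
      = x * ((n.choose r : ℚ) * ff (x-1) r * ff (c+n+1) (n-r))
        + (x+c+1) * ((n.choose r : ℚ) * ff x r * ff (c+n+1) (n-r)) := by
    intro r hr
    have hrn : ((n - r : ℕ) : ℚ) = (n : ℚ) - r := by
      have := Finset.mem_range.mp hr
      rw [Nat.cast_sub (by omega)]
    rw [rp_eq_ff]
    have harg : c + (r:ℚ) + 2 + ((n-r : ℕ):ℚ) - 1 = c + n + 1 := by
      rw [hrn]; ring
    rw [harg]
    have h1 : ff x r * (x - r) = x * ff (x-1) r :=
      (ff_succ x r).symm.trans (ff_succ' x r)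
    linear_combination ((n.choose r : ℚ) * ff (c+(n:ℚ)+1) (n-r)) * h1
  rw [Finset.sum_congr rfl key, Finset.sum_add_distrib, ← Finset.mul_sum,
    ← Finset.mul_sum, vdm, vdm]
  have e1 : x - 1 + (c + n + 1) = x + c + n := by ring
  have e2 : x + (c + n + 1) = (x + c + n) + 1 := by ring
  rw [e1, e2]
  have h2 : ff (x+c+n+1) n * ((x+c+n+1) - n) = (x+c+n+1) * ff (x+c+n+1-1) n :=
    (ff_succ (x+c+(n:ℚ)+1) n).symm.trans (ff_succ' (x+c+(n:ℚ)+1) n)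
  have e3 : x + c + (n:ℚ) + 1 - 1 = x + c + n := by ring
  rw [e3] at h2
  linear_combination h2

end RowAux


end RowAuxSection

lemma pochP_eval (p : ℚ[X]) (k : ℕ) (m : ℚ) :
    (pochP p k).eval m = ∏ t ∈ Finset.range k, (p.eval m + t) := by
  simp [pochP, eval_prod]


/-- For integers `i, j, N` with `1 ≤ j ≤ N` and `i ≠ 0`, the polynomial
identity in `m` (here `m = X`):
`(−1)^j ∑_{k=1}^{j} C(j−1,k−1) (m+i−k+1)_{k−1} (N+k−2i+2)_{N−k} (N+2m−k+1)/2
 = (−N−m+i−j+1)_{j−1} (N+j−2i+2)_{N−j} (−2m−N−j+1)/2`. -/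
theorem row_transform_A (i : ℤ) (j N : ℕ) (hj : 1 ≤ j) (hjN : j ≤ N)
    (hi : i ≠ 0) :
    (-1 : ℚ[X]) ^ j *
      ∑ k ∈ Finset.Icc 1 j,
        (((j - 1).choose (k - 1) : ℚ[X])) *
          pochP (X + C ((i : ℚ) - k + 1)) (k - 1) *
          pochP (C ((N : ℚ) + k - 2 * i + 2)) (N - k) *
          ((2 * X + C ((N : ℚ) - k + 1)) * C (1 / 2 : ℚ)) =
    pochP (C (-(N : ℚ) + i - j + 1) - X) (j - 1) *
      pochP (C ((N : ℚ) + j - 2 * i + 2)) (N - j) *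
      ((-(2 * X) + C (-(N : ℚ) - j + 1)) * C (1 / 2 : ℚ)) := by
  obtain ⟨n, rfl⟩ : ∃ n, j = n + 1 := ⟨j - 1, by omega⟩
  apply Polynomial.funext
  intro m
  simp only [pochP_eval, eval_mul, eval_add, eval_sub, eval_neg, eval_pow, eval_one,
    eval_C, eval_X, eval_natCast, eval_ofNat, Polynomial.eval_finset_sum]
  rw [← Finset.Ico_add_one_right_eq_Icc, Finset.sum_Ico_eq_sum_range]
  have hfold : ∀ (a : ℚ) (k : ℕ), (∏ t ∈ Finset.range k, (a + (t:ℚ))) = RowAux.rp a k :=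
    fun _ _ => rfl
  simp only [hfold, Nat.add_sub_cancel, Nat.succ_sub_one, Nat.add_sub_cancel_left]
  have hterm : ∀ r ∈ Finset.range (n+1),
      (n.choose r : ℚ) * RowAux.rp (m + ((i:ℚ) - ↑(1+r) + 1)) r *
          RowAux.rp ((N:ℚ) + ↑(1+r) - 2*i + 2) (N - (1+r)) *
        ((2*m + ((N:ℚ) - ↑(1+r) + 1)) * (1/2))
      = (n.choose r : ℚ) * RowAux.ff (m+(i:ℚ)-1) r *
          RowAux.rp (((N:ℚ)-2*i+1)+r+2) (n-r) *
          (2*(m+(i:ℚ)-1)+((N:ℚ)-2*i+1)+1-r)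
        * (RowAux.rp ((N:ℚ) + ↑(n+1) - 2*i + 2) (N-(n+1)) * (1/2)) := by
    intro r hr
    have hr1 : r < n+1 := Finset.mem_range.mp hr
    have e1 : RowAux.rp (m + ((i:ℚ) - ↑(1+r) + 1)) r = RowAux.ff (m+(i:ℚ)-1) r := by
      rw [RowAux.rp_eq_ff]; congr 1; push_cast; ring
    have esplit : N - (1+r) = (n-r) + (N-(n+1)) := by omega
    have e2 : RowAux.rp ((N:ℚ) + ↑(1+r) - 2*i + 2) (N - (1+r))
        = RowAux.rp (((N:ℚ)-2*i+1)+r+2) (n-r) *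
            RowAux.rp ((N:ℚ) + ↑(n+1) - 2*i + 2) (N-(n+1)) := by
      rw [esplit, RowAux.rp_add]
      congr 1
      · congr 1; push_cast; ring
      · congr 1; rw [Nat.cast_sub (by omega)]; push_cast; ring
    rw [e1, e2]; push_cast; ring
  rw [Finset.sum_congr rfl hterm, ← Finset.sum_mul,
    RowAux.core n (m+(i:ℚ)-1) ((N:ℚ)-2*i+1)]
  have e3 : (-(N:ℚ) + ↑i - ↑(n+1) + 1 - m)
      = -(m + (i:ℚ) - 1 + ((N:ℚ) - 2*i + 1) + ↑n) := by push_cast; ring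
  rw [e3, RowAux.rp_neg]
  push_cast
  ring
end

section
/- For integers i, j, N with 1 ≤ j ≤ N: (−1)^j ∑_{k=1}^{j} C(j−1, k−1) · (m+i−k+1)_{k−1} · (N+k−2i+1)_{N−k+1} = −(−N−m+i−j+1)_{j−1} · (N−2i+j+1)_{N−j+1}, as an identity of polynomials in m. -/
open Polynomial

/-- The falling factorial `p(p-1)⋯(p-k+1)` of a polynomial. -/
noncomputable def fallP (p : ℚ[X]) (k : ℕ) : ℚ[X] :=
  ∏ t ∈ Finset.range k, (p - (t : ℚ[X]))

lemma fallP_succ (p : ℚ[X]) (k : ℕ) : fallP p (k+1) = fallP p k * (p - k) := by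
  simp [fallP, Finset.prod_range_succ]

lemma pochP_succ_left (p : ℚ[X]) (k : ℕ) : pochP p (k+1) = p * pochP (p+1) k := by
  rw [pochP, Finset.prod_range_succ']
  rw [mul_comm]
  congr 1
  · norm_num
  · rw [pochP]
    apply Finset.prod_congr rfl
    intro t _
    push_cast
    ring

lemma pochP_eq_fallP (k : ℕ) : ∀ p : ℚ[X], pochP p k = fallP (p + k - 1) k := by
  induction k with
  | zero => intro p; simp [pochP, fallP]
  | succ k ih =>
    intro p
    rw [pochP_succ_left, ih (p+1)]
    have h2 : (p + (k+1:ℕ) - 1 : ℚ[X]) = p + k := by push_cast; ring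
    rw [h2, fallP_succ]
    have h3 : (p + 1 + (k:ℚ[X]) - 1) = p + k := by ring
    rw [h3]
    ring

lemma fallP_eq_pochP (q : ℚ[X]) (k : ℕ) : fallP q k = pochP (q - k + 1) k := by
  rw [pochP_eq_fallP]
  congr 1
  ring

lemma fallP_neg (q : ℚ[X]) (k : ℕ) : fallP (-q) k = (-1)^k * pochP q k := by
  rw [fallP, pochP]
  have : ∀ t ∈ Finset.range k, (-q - (t:ℚ[X])) = (-1) * (q + t) := by
    intro t _; ring
  rw [Finset.prod_congr rfl this, Finset.prod_mul_distrib, Finset.prod_const,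
    Finset.card_range]

lemma pochP_add (p : ℚ[X]) (u v : ℕ) :
    pochP p (u+v) = pochP p u * pochP (p + u) v := by
  rw [pochP, Finset.prod_range_add]
  congr 1
  apply Finset.prod_congr rfl
  intro t _
  push_cast
  ring

/-- Vandermonde's identity for falling factorials of polynomials. -/
lemma vdm (x z : ℚ[X]) : ∀ n : ℕ,
    ∑ s ∈ Finset.range (n+1), (n.choose s : ℚ[X]) * fallP x s * fallP z (n-s)
      = fallP (x+z) n := by
  intro n
  induction n with
  | zero => simp [fallP]
  | succ n ih =>
    rw [fallP_succ, ← ih, Finset.sum_mul]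
    have key : ∀ s ∈ Finset.range (n+1),
        ((n.choose s : ℚ[X]) * fallP x s * fallP z (n-s)) * (x + z - n)
          = (n.choose s : ℚ[X]) * fallP x (s+1) * fallP z (n-s)
            + (n.choose s : ℚ[X]) * fallP x s * fallP z ((n+1)-s) := by
      intro s hs
      rw [Finset.mem_range] at hs
      have hsn : s ≤ n := Nat.lt_succ_iff.mp hs
      have h1 : (n+1) - s = (n-s) + 1 := by omega
      rw [h1, fallP_succ, fallP_succ]
      have h2 : ((n - s : ℕ) : ℚ[X]) = (n : ℚ[X]) - s := by
        push_cast [Nat.cast_sub hsn]; ring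
      rw [h2]
      ring
    rw [Finset.sum_congr rfl key, Finset.sum_add_distrib]
    rw [Finset.sum_range_succ' (fun s => ((n+1).choose s : ℚ[X]) * fallP x s * fallP z ((n+1)-s)) (n+1)]
    have e0 : ((n+1).choose 0 : ℚ[X]) * fallP x 0 * fallP z ((n+1)-0)
        = fallP z (n+1) := by simp [fallP]
    rw [e0]
    have esucc : ∀ s ∈ Finset.range (n+1),
        ((n+1).choose (s+1) : ℚ[X]) * fallP x (s+1) * fallP z ((n+1)-(s+1))
          = (n.choose s : ℚ[X]) * fallP x (s+1) * fallP z (n-s)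
            + (n.choose (s+1) : ℚ[X]) * fallP x (s+1) * fallP z (n-s) := by
      intro s hs
      have h1 : (n+1)-(s+1) = n - s := by omega
      rw [h1, Nat.choose_succ_succ]
      push_cast
      ring
    rw [Finset.sum_congr rfl esucc, Finset.sum_add_distrib]
    rw [add_assoc]
    congr 1
    set g : ℕ → ℚ[X] := fun s => (n.choose s : ℚ[X]) * fallP x s * fallP z ((n+1)-s) with hg
    have hB : ∀ s ∈ Finset.range (n+1),
        (n.choose (s+1) : ℚ[X]) * fallP x (s+1) * fallP z (n-s) = g (s+1) := by
      intro s hs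
      have h1 : (n+1)-(s+1) = n - s := by omega
      rw [hg]; dsimp only; rw [h1]
    rw [Finset.sum_congr rfl hB]
    have h2 : fallP z (n+1) = g 0 := by simp [hg, fallP]
    rw [h2, ← Finset.sum_range_succ' g (n+1), Finset.sum_range_succ g (n+1)]
    have h3 : g (n+1) = 0 := by
      simp [hg, Nat.choose_succ_self]
    rw [h3, add_zero]

/-- For integers `i, j, N` with `1 ≤ j ≤ N`, the polynomial identity in `m`
(here `m = X`):
`(−1)^j ∑_{k=1}^{j} C(j−1,k−1) (m+i−k+1)_{k−1} (N+k−2i+1)_{N−k+1}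
 = −(−N−m+i−j+1)_{j−1} (N−2i+j+1)_{N−j+1}`. -/
theorem row_transform_B (i : ℤ) (j N : ℕ) (hj : 1 ≤ j) (hjN : j ≤ N) :
    (-1 : ℚ[X]) ^ j *
      ∑ k ∈ Finset.Icc 1 j,
        (((j - 1).choose (k - 1) : ℚ[X])) *
          pochP (X + C ((i : ℚ) - k + 1)) (k - 1) *
          pochP (C ((N : ℚ) + k - 2 * i + 1)) (N - k + 1) =
    -(pochP (C (-(N : ℚ) + i - j + 1) - X) (j - 1) *
        pochP (C ((N : ℚ) - 2 * i + j + 1)) (N - j + 1)) := by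
  obtain ⟨n, rfl⟩ : ∃ n, j = n + 1 := ⟨j - 1, by omega⟩
  have hnN : n + 1 ≤ N := hjN
  -- reindex the sum to `range (n+1)`
  have hre : ∑ k ∈ Finset.Icc 1 (n+1),
        (((n+1-1).choose (k - 1) : ℚ[X])) *
          pochP (X + C ((i : ℚ) - k + 1)) (k - 1) *
          pochP (C ((N : ℚ) + k - 2 * i + 1)) (N - k + 1)
      = ∑ s ∈ Finset.range (n+1),
        (((n+1-1).choose ((s+1) - 1) : ℚ[X])) *
          pochP (X + C ((i : ℚ) - (s+1:ℕ) + 1)) ((s+1) - 1) *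
          pochP (C ((N : ℚ) + (s+1:ℕ) - 2 * i + 1)) (N - (s+1) + 1) := by
    apply Finset.sum_nbij' (fun k => k - 1) (fun s => s + 1) <;>
      simp +contextual [Finset.mem_Icc, Finset.mem_range] <;> omega
  rw [hre]
  have hterm : ∀ s ∈ Finset.range (n+1),
      (((n+1-1).choose ((s+1) - 1) : ℚ[X])) *
          pochP (X + C ((i : ℚ) - (s+1:ℕ) + 1)) ((s+1) - 1) *
          pochP (C ((N : ℚ) + (s+1:ℕ) - 2 * i + 1)) (N - (s+1) + 1)
        = pochP (C ((N:ℚ) - 2*i + n + 2)) (N-n) *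
            ((n.choose s : ℚ[X]) * fallP (X + C ((i:ℚ)-1)) s
              * fallP (C ((N:ℚ) - 2*i + n + 1)) (n-s)) := by
    intro s hs
    rw [Finset.mem_range] at hs
    have hsn : s ≤ n := Nat.lt_succ_iff.mp hs
    rw [show (s+1) - 1 = s from rfl, show n+1-1 = n from rfl,
      show N - (s+1) + 1 = (n-s) + (N-n) from by omega,
      show ((i:ℚ) - (s+1:ℕ) + 1) = (i:ℚ) - s from by push_cast; ring,
      show ((N:ℚ) + (s+1:ℕ) - 2*i + 1) = (N:ℚ) + s - 2*i + 2 from by push_cast; ring]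
    rw [pochP_add, pochP_eq_fallP s, pochP_eq_fallP (n-s)]
    have hns : ((n - s : ℕ) : ℚ[X]) = (n : ℚ[X]) - s := by
      push_cast [Nat.cast_sub hsn]; ring
    rw [show (X + C ((i:ℚ) - s) + (s:ℚ[X]) - 1) = X + C ((i:ℚ)-1) from by
        simp only [map_sub, map_add, map_one, map_natCast, map_intCast]; ring,
      show (C ((N:ℚ) + s - 2*i + 2) + ((n-s:ℕ):ℚ[X]) - 1) = C ((N:ℚ) - 2*i + n + 1) from by
        rw [hns]
        simp only [map_sub, map_add, map_one, map_mul, map_ofNat, map_natCast, map_intCast]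
        ring,
      show (C ((N:ℚ) + s - 2*i + 2) + ((n-s:ℕ):ℚ[X])) = C ((N:ℚ) - 2*i + n + 2) from by
        rw [hns]
        simp only [map_sub, map_add, map_one, map_mul, map_ofNat, map_natCast, map_intCast]
        ring]
    ring
  rw [Finset.sum_congr rfl hterm, ← Finset.mul_sum,
    vdm (X + C ((i:ℚ)-1)) (C ((N:ℚ) - 2*i + n + 1)) n]
  -- simplify RHS
  rw [show N - (n+1) + 1 = N - n from by omega, show n+1-1 = n from rfl,
    show (-(N:ℚ) + i - (n+1:ℕ) + 1) = -(N:ℚ) + i - n from by push_cast; ring,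
    show ((N:ℚ) - 2*i + (n+1:ℕ) + 1) = (N:ℚ) - 2*i + n + 2 from by push_cast; ring]
  rw [pochP_eq_fallP n (C (-(N:ℚ) + i - n) - X)]
  rw [show (C (-(N:ℚ) + i - n) - X + (n:ℚ[X]) - 1) = -(X + C ((N:ℚ) - i + 1)) from by
      simp only [map_sub, map_add, map_one, map_neg, map_natCast, map_intCast]; ring]
  rw [fallP_neg]
  -- simplify LHS fallP
  rw [fallP_eq_pochP]
  rw [show (X + C ((i:ℚ)-1) + C ((N:ℚ) - 2*i + n + 1) - (n:ℚ[X]) + 1)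
        = X + C ((N:ℚ) - i + 1) from by
      simp only [map_sub, map_add, map_one, map_mul, map_ofNat, map_natCast, map_intCast]
      ring]
  ring
end

section
/- For positive integers N and l with 1 ≤ l ≤ N, let D(m;N,l) be the N×N matrix over ℚ[m] with (i,j)-entry (m+i−j+1)_{j−1}(N+j−2i+2)_{N−j}(N+2m−j+1)/2 if i ≠ l, and (m+i−j+1)_{j−1}(N+j−2i+1)_{N−j+1} if i = l. Then det D(m;N,l), as a polynomial in m, has degree at most N(N+1)/2 − 1. -/
set_option maxHeartbeats 1000000


open Polynomial

/-- The matrix `D(m;N,l)` over `ℚ[m]`, with the variable `m` replaced by the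
polynomial `p`: its `(i,j)`-entry (indices `1,…,N`) is
`(m+i−j+1)_{j−1}(N+j−2i+2)_{N−j}(N+2m−j+1)/2` if `i ≠ l` and
`(m+i−j+1)_{j−1}(N+j−2i+1)_{N−j+1}` if `i = l`. -/
noncomputable def Dmat (N l : ℕ) (p : ℚ[X]) : Matrix (Fin N) (Fin N) ℚ[X] :=
  Matrix.of fun i j =>
    if i.1 + 1 = l then
      pochP (p + C (((i.1 + 1 : ℕ) : ℚ) - (j.1 + 1) + 1)) j.1 *
        pochP (C ((N : ℚ) + (j.1 + 1) - 2 * (i.1 + 1) + 1)) (N - (j.1 + 1) + 1)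
    else
      pochP (p + C (((i.1 + 1 : ℕ) : ℚ) - (j.1 + 1) + 1)) j.1 *
        pochP (C ((N : ℚ) + (j.1 + 1) - 2 * (i.1 + 1) + 2)) (N - (j.1 + 1)) *
        ((2 * p + C ((N : ℚ) - (j.1 + 1) + 1)) * C (1 / 2 : ℚ))



lemma pochP_natDegree_le (p : ℚ[X]) (k : ℕ) :
    (pochP p k).natDegree ≤ k * p.natDegree := by
  refine (natDegree_prod_le _ _).trans ?_
  calc ∑ t ∈ Finset.range k, (p + (t : ℚ[X])).natDegree
      ≤ ∑ t ∈ Finset.range k, p.natDegree := by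
        refine Finset.sum_le_sum fun t _ => ?_
        refine (natDegree_add_le _ _).trans ?_
        simp [natDegree_natCast]
    _ = k * p.natDegree := by simp [Finset.sum_const, mul_comm]

lemma pochP_XC_natDegree_le (c : ℚ) (k : ℕ) :
    (pochP (X + C c) k).natDegree ≤ k := by
  refine (pochP_natDegree_le _ _).trans ?_
  rw [natDegree_X_add_C]; omega

lemma entry_deg (N l : ℕ) (i j : Fin N) :
    ((Dmat N l X) i j).natDegree ≤ j.1 + (if i.1 + 1 = l then 0 else 1) := by
  rw [Dmat]
  simp only [Matrix.of_apply]
  by_cases h : i.1 + 1 = l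
  · rw [if_pos h, if_pos h]
    refine (natDegree_mul_le).trans ?_
    have h1 := pochP_XC_natDegree_le (((i.1 + 1 : ℕ) : ℚ) - (j.1 + 1) + 1) j.1
    have h2 := pochP_natDegree_le (C ((N : ℚ) + (j.1 + 1) - 2 * (i.1 + 1) + 1)) (N - (j.1+1) + 1)
    simp only [natDegree_C, mul_zero, Nat.le_zero] at h2
    omega
  · rw [if_neg h, if_neg h]
    refine (natDegree_mul_le).trans ?_
    have h1 := pochP_XC_natDegree_le (((i.1 + 1 : ℕ) : ℚ) - (j.1 + 1) + 1) j.1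
    have h2 := pochP_natDegree_le (C ((N : ℚ) + (j.1 + 1) - 2 * (i.1 + 1) + 2)) (N - (j.1+1))
    simp only [natDegree_C, mul_zero, Nat.le_zero] at h2
    have h3 : ((2 * X + C ((N : ℚ) - (j.1 + 1) + 1)) * C (1 / 2 : ℚ)).natDegree ≤ 1 := by
      refine (natDegree_mul_le).trans ?_
      have h4 : (2 * X + C ((N : ℚ) - (j.1 + 1) + 1)).natDegree ≤ 1 := by
        refine (natDegree_add_le _ _).trans ?_
        have : ((2 : ℚ[X]) * X).natDegree ≤ 1 := by
          refine (natDegree_mul_le).trans ?_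
          simp [natDegree_X]
        simp only [natDegree_C]
        omega
      simp only [natDegree_C, add_zero]
      exact h4
    have hAB : (pochP (X + C (((i.1 + 1 : ℕ) : ℚ) - (j.1 + 1) + 1)) j.1 *
        pochP (C ((N : ℚ) + (j.1 + 1) - 2 * (i.1 + 1) + 2)) (N - (j.1+1))).natDegree ≤ j.1 :=
      (natDegree_mul_le).trans (by omega)
    exact (Nat.add_le_add hAB h3).trans (by omega)

/-- `det D(m;N,l)` has degree at most `N(N+1)/2 − 1` as a polynomial in `m`. -/
theorem det_D_degree (N l : ℕ) (hN : 0 < N) (hl : 1 ≤ l) (hlN : l ≤ N) :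
    ((Dmat N l X).det).natDegree ≤ N * (N + 1) / 2 - 1 := by
  rw [Matrix.det_apply]
  refine natDegree_sum_le_of_forall_le _ _ fun σ _ => ?_
  refine le_trans ?_ (?_ : ∑ i : Fin N, ((Dmat N l X) (σ i) i).natDegree ≤ _)
  · rw [Units.smul_def, zsmul_eq_mul]
    refine (natDegree_mul_le).trans ?_
    simpa [natDegree_intCast] using natDegree_prod_le Finset.univ (fun i => (Dmat N l X) (σ i) i)
  have key : ∑ i : Fin N, ((Dmat N l X) (σ i) i).natDegree ≤
      ∑ i : Fin N, (i.1 + (if (σ i).1 + 1 = l then 0 else 1)) :=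
    Finset.sum_le_sum fun i _ => entry_deg N l (σ i) i
  refine key.trans ?_
  rw [Finset.sum_add_distrib]
  have hs1 : ∑ i : Fin N, i.1 = N * (N - 1) / 2 := by
    rw [Fin.sum_univ_eq_sum_range (fun i => i) N, Finset.sum_range_id]
  have hs2 : ∑ i : Fin N, (if (σ i).1 + 1 = l then 0 else 1) = N - 1 := by
    rw [Equiv.sum_comp σ (fun i : Fin N => if i.1 + 1 = l then 0 else 1)]
    set a : Fin N := ⟨l - 1, by omega⟩ with ha
    have hiff : ∀ i : Fin N, (i.1 + 1 = l) ↔ i = a := by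
      intro i; rw [Fin.ext_iff]; simp only [ha]; omega
    have h2 : ∑ i : Fin N, (if i.1 + 1 = l then (1:ℕ) else 0) = 1 := by
      simp only [hiff]
      rw [Finset.sum_ite_eq' Finset.univ a (fun _ => (1:ℕ))]
      simp
    have h1 : ∑ i : Fin N, ((if i.1 + 1 = l then (0:ℕ) else 1) + (if i.1 + 1 = l then 1 else 0))
        = N := by
      have : ∀ i : Fin N, ((if i.1 + 1 = l then (0:ℕ) else 1) + (if i.1 + 1 = l then 1 else 0))
          = 1 := by intro i; by_cases h : i.1 + 1 = l <;> simp [h]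
      simp only [this, Finset.sum_const, Finset.card_univ, Fintype.card_fin, smul_eq_mul, mul_one]
    rw [Finset.sum_add_distrib, h2] at h1
    omega
  rw [hs1, hs2]
  have hh : N * (N + 1) / 2 = N * (N - 1) / 2 + N := by
    have h1 : N * (N + 1) = N * (N - 1) + 2 * N := by
      cases N with
      | zero => omega
      | succ n => simp only [Nat.add_sub_cancel]; ring
    omega
  omega
end

section
/- For every positive integer N, nonnegative integer m, and 1 ≤ l ≤ N, the expression ∑_{e=0}^{l−1} (−1)^e C(N,e) (N−2e)(1/2)_e / ((m+e)(m+N−e)(1/2−N)_e) is invariant under replacing l by N+1−l; i.e., the sum over e = 0,…,l−1 equals the sum over e = 0,…,N−l. -/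
lemma poch_pos (x : ℚ) (hx : 0 < x) (k : ℕ) : 0 < poch x k := by
  unfold poch
  exact Finset.prod_pos (fun t _ => by positivity)

lemma poch_add (x : ℚ) (a b : ℕ) : poch x (a + b) = poch x a * poch (x + a) b := by
  unfold poch
  rw [Finset.prod_range_add]
  congr 1
  apply Finset.prod_congr rfl
  intro i _
  push_cast
  ring

lemma poch_reflect (N e : ℕ) (he : e ≤ N) :
    poch (1/2 - (N:ℚ)) e = (-1)^e * poch (1/2 + ((N - e : ℕ) : ℚ)) e := by
  unfold poch
  rw [← Finset.prod_range_reflect (fun t => (1/2 - (N:ℚ) + t)) e]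
  rw [show ((-1:ℚ))^e = ∏ _t ∈ Finset.range e, (-1:ℚ) by simp, ← Finset.prod_mul_distrib]
  apply Finset.prod_congr rfl
  intro i hi
  simp only [Finset.mem_range] at hi
  have h1 : ((e - 1 - i : ℕ) : ℚ) = (e : ℚ) - 1 - i := by
    have : 1 + i ≤ e := by omega
    push_cast [Nat.sub_sub, Nat.cast_sub this]
    ring
  have h2 : ((N - e : ℕ) : ℚ) = (N : ℚ) - e := by push_cast [Nat.cast_sub he]; ring
  rw [h1, h2]
  ring

lemma key_antisym (N m e : ℕ) (hm : 1 ≤ m) (he : e ≤ N) :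
    (-1 : ℚ) ^ (N - e) * (N.choose (N - e) : ℚ) * ((N : ℚ) - 2 * (N - e : ℕ)) *
        poch (1 / 2) (N - e) /
        (((m : ℚ) + (N - e : ℕ)) * ((m : ℚ) + N - (N - e : ℕ)) *
          poch (1 / 2 - (N : ℚ)) (N - e)) =
    -((-1 : ℚ) ^ e * (N.choose e : ℚ) * ((N : ℚ) - 2 * e) * poch (1 / 2) e /
        (((m : ℚ) + e) * ((m : ℚ) + N - e) * poch (1 / 2 - (N : ℚ)) e)) := by
  have hcast : ((N - e : ℕ) : ℚ) = (N : ℚ) - e := by push_cast [Nat.cast_sub he]; ring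
  rw [Nat.choose_symm he, poch_reflect N e he, poch_reflect N (N - e) (Nat.sub_le N e),
    Nat.sub_sub_self he, hcast]
  have he' : (e : ℚ) ≤ (N : ℚ) := by exact_mod_cast he
  have hm' : (1 : ℚ) ≤ (m : ℚ) := by exact_mod_cast hm
  have h1 : ((m : ℚ) + e) ≠ 0 := by positivity
  have h2 : ((m : ℚ) + N - e) ≠ 0 := by nlinarith
  have hp1 : poch (1/2 + (e : ℚ)) (N - e) ≠ 0 :=
    ne_of_gt (poch_pos _ (by positivity) _)
  have hp2 : poch (1/2 + ((N : ℚ) - e)) e ≠ 0 :=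
    ne_of_gt (poch_pos _ (by linarith) _)
  have hs1 : ((-1 : ℚ) ^ (N - e)) ≠ 0 := by
    simp [pow_ne_zero]
  have hs2 : ((-1 : ℚ) ^ e) ≠ 0 := by simp [pow_ne_zero]
  have hkey : poch (1/2) e * poch (1/2 + (e:ℚ)) (N - e) =
      poch (1/2) (N - e) * poch (1/2 + ((N:ℚ) - e)) e := by
    have ha : e + (N - e) = N := by omega
    have hb : (N - e) + e = N := by omega
    have h1 := poch_add (1/2) e (N - e)
    have h2 := poch_add (1/2) (N - e) e
    rw [ha] at h1; rw [hb] at h2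
    rw [hcast] at h2
    rw [← h1, ← h2]
  have hsign : (-1 : ℚ) ^ (N - e) * (-1 : ℚ) ^ e = (-1) ^ N := by
    rw [← pow_add]; congr 1; omega
  rw [neg_div' ]
  have h3 : (m:ℚ) + ((N:ℚ) - e) ≠ 0 := ne_of_gt (by linarith)
  have h4 : (m:ℚ) + (N:ℚ) - ((N:ℚ) - e) ≠ 0 := ne_of_gt (by linarith)
  rw [div_eq_div_iff (mul_ne_zero (mul_ne_zero h3 h4) (mul_ne_zero hs1 hp1))
    (mul_ne_zero (mul_ne_zero h1 h2) (mul_ne_zero hs2 hp2))]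
  linear_combination ((-1:ℚ)^(N-e) * (-1)^e * (N.choose e : ℚ) * ((m:ℚ)+e) *
      ((m:ℚ)+N-e) * ((N:ℚ)-2*e)) * hkey

/-- The sum `∑_{e=0}^{l−1} (−1)^e C(N,e)(N−2e)(1/2)_e/((m+e)(m+N−e)(1/2−N)_e)`
is invariant under `l ↦ N+1−l` (with `m ≥ 1` so all denominators are nonzero). -/
theorem sum_symmetry (N m l : ℕ) (hN : 0 < N) (hm : 1 ≤ m)
    (hl : 1 ≤ l) (hlN : l ≤ N) :
    ∑ e ∈ Finset.range l,
        (-1 : ℚ) ^ e * (N.choose e : ℚ) * ((N : ℚ) - 2 * e) * poch (1 / 2) e /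
          (((m : ℚ) + e) * ((m : ℚ) + N - e) * poch (1 / 2 - (N : ℚ)) e) =
      ∑ e ∈ Finset.range (N + 1 - l),
        (-1 : ℚ) ^ e * (N.choose e : ℚ) * ((N : ℚ) - 2 * e) * poch (1 / 2) e /
          (((m : ℚ) + e) * ((m : ℚ) + N - e) * poch (1 / 2 - (N : ℚ)) e) := by
  set f : ℕ → ℚ := fun e =>
    (-1 : ℚ) ^ e * (N.choose e : ℚ) * ((N : ℚ) - 2 * e) * poch (1 / 2) e /
      (((m : ℚ) + e) * ((m : ℚ) + N - e) * poch (1 / 2 - (N : ℚ)) e) with hf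
  have hanti : ∀ e, e ≤ N → f (N - e) = -f e := fun e he => key_antisym N m e hm he
  have htot : ∑ e ∈ Finset.range (N + 1), f e = 0 := by
    have hrefl := Finset.sum_range_reflect f (N + 1)
    have : ∑ j ∈ Finset.range (N + 1), f (N + 1 - 1 - j) =
        ∑ j ∈ Finset.range (N + 1), (-f j) := by
      apply Finset.sum_congr rfl
      intro j hj
      simp only [Finset.mem_range] at hj
      rw [show N + 1 - 1 - j = N - j from by omega]
      exact hanti j (by omega)
    rw [this, Finset.sum_neg_distrib] at hrefl
    linarith
  have hsplit : N + 1 = l + (N + 1 - l) := by omega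
  rw [hsplit, Finset.sum_range_add] at htot
  have h2 : ∑ i ∈ Finset.range (N + 1 - l), f (l + i) =
      -∑ i ∈ Finset.range (N + 1 - l), f i := by
    rw [← Finset.sum_range_reflect f (N + 1 - l), ← Finset.sum_neg_distrib]
    apply Finset.sum_congr rfl
    intro i hi
    simp only [Finset.mem_range] at hi
    have h1 : l + i = N - (N - l - i) := by omega
    rw [h1, hanti (N - l - i) (by omega),
      show N - l - i = N + 1 - l - 1 - i from by omega]
  rw [h2] at htot
  linarith
end

section
/- For integers e, k, N with 1 ≤ k ≤ e ≤ ⌊N/2⌋ − 1 and any integer i with 1 ≤ i ≤ N: ∑_{j=0}^{k} C(k,j) · (e+i−j−k−1/2−N)_{N−2e+j+k} · (2N+3−2e−2i+j+k)_{2e−j−k−1} · (−j−k−1)/2 = 0. -/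
lemma poch_zero (x : ℚ) : poch x 0 = 1 := Finset.prod_range_zero _

lemma poch_succ (x : ℚ) (n : ℕ) : poch x (n+1) = poch x n * (x + n) :=
  Finset.prod_range_succ _ _

lemma poch_succ' (x : ℚ) (n : ℕ) : poch x (n+1) = x * poch (x+1) n := by
  unfold poch
  rw [Finset.prod_range_succ']
  rw [mul_comm]
  rw [show x + ((0:ℕ):ℚ) = x by push_cast; ring]
  congr 1
  exact Finset.prod_congr rfl (fun t _ => by push_cast; ring)

lemma poch_eq_poch {a b : ℚ} {n n' : ℕ} (h : a = b) (hn : n = n') :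
    poch a n = poch b n' := by rw [h, hn]

lemma poch_shift (a : ℚ) (n j : ℕ) :
    poch (a - j) (n + j) = (∏ s ∈ Finset.range j, (a - 1 - s)) * poch a n := by
  induction j with
  | zero => simp [poch]
  | succ j ih =>
      have h1 : a - ((j:ℕ)+1 : ℚ) + 1 = a - j := by ring
      rw [show n + (j+1) = (n + j) + 1 from rfl, poch_succ']
      push_cast
      push_cast at ih
      rw [h1, ih, Finset.prod_range_succ]
      ring

lemma prod_neg (y : ℚ) (j : ℕ) :
    (∏ s ∈ Finset.range j, (-y - s)) = (-1)^j * poch y j := by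
  induction j with
  | zero => simp [poch_zero]
  | succ j ih => rw [Finset.prod_range_succ, ih, poch_succ]; ring

/-- Partial-sum (telescoping) function for the column relation. -/
def Hc (N e k i : ℕ) : ℕ → ℚ
  | 0 => 0
  | (m+1) => -(poch ((e:ℚ)+i-k+1/2-N) (N - 2*e + k - 1)) * (-1)^m *
      ((k-1).choose m : ℚ) * ((k:ℚ)/2) * (2*(N:ℚ)+k+2-2*e-2*i+m) *
      poch ((N:ℚ)+k+3/2-e-i) m * poch (2*(N:ℚ)+k+3-2*e-2*i+m) (2*e - k - m - 1)

/-- Vanishing of the column linear combinations of the matrix `D(−e−1/2; N, l)`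
(columns `N−2e+k+j`, `j = 0,…,k`, in a row `i ≠ l`): for
`1 ≤ k ≤ e ≤ ⌊N/2⌋ − 1` and `1 ≤ i ≤ N`,
`∑_{j=0}^{k} C(k,j)(e+i−j−k+1/2−N)_{N−2e+j+k−1}(2N+2−2e−2i+j+k)_{2e−j−k}(−j−k)/2 = 0`.
(This corrects the misprinted indices in the paper's equation (3.13).) -/
theorem column_relation_vanishing (N e k i : ℕ)
    (hk : 1 ≤ k) (hke : k ≤ e) (he : e ≤ N / 2 - 1) (hi : 1 ≤ i) (hiN : i ≤ N) :
    ∑ j ∈ Finset.range (k + 1),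
        (k.choose j : ℚ) *
          poch ((e : ℚ) + i - j - k + 1 / 2 - N) (N - 2 * e + j + k - 1) *
          poch (2 * (N : ℚ) + 2 - 2 * e - 2 * i + j + k) (2 * e - j - k) *
          ((-(j : ℚ) - k) / 2) = 0 := by
  have hN : 2*e + 2 ≤ N := by omega
  obtain ⟨k', rfl⟩ : ∃ k', k = k' + 1 := ⟨k - 1, by omega⟩
  have key : ∀ j ∈ Finset.range (k' + 1 + 1),
      ((k'+1).choose j : ℚ) *
          poch ((e : ℚ) + i - j - ((k'+1 : ℕ) : ℚ) + 1 / 2 - N) (N - 2 * e + j + (k'+1) - 1) *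
          poch (2 * (N : ℚ) + 2 - 2 * e - 2 * i + j + ((k'+1 : ℕ) : ℚ)) (2 * e - j - (k'+1)) *
          ((-(j : ℚ) - ((k'+1 : ℕ) : ℚ)) / 2)
        = Hc N e (k'+1) i (j+1) - Hc N e (k'+1) i j := by
    intro j hj
    rw [Finset.mem_range] at hj
    rcases j with _ | m
    · -- j = 0
      simp only [Hc, Nat.add_sub_cancel, Nat.choose_zero_right, Nat.cast_one, poch_zero,
        pow_zero]
      rw [show poch ((e:ℚ) + ↑i - ↑(0:ℕ) - ↑(k'+1) + 1/2 - ↑N) (N - 2*e + 0 + (k'+1) - 1)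
            = poch ((e:ℚ) + i - (↑k'+1) + 1/2 - N) (N - 2*e + k') from
          poch_eq_poch (by push_cast; ring) (by omega)]
      rw [show poch ((e:ℚ) + ↑i - ↑(k'+1) + 1/2 - ↑N) (N - 2*e + (k'+1) - 1)
            = poch ((e:ℚ) + i - (↑k'+1) + 1/2 - N) (N - 2*e + k') from
          poch_eq_poch (by push_cast; ring) (by omega)]
      rw [show poch (2*(N:ℚ) + 2 - 2*↑e - 2*↑i + ↑(0:ℕ) + ↑(k'+1)) (2*e - 0 - (k'+1))
            = poch (2*(N:ℚ) + ↑k' + 3 - 2*e - 2*i) ((2*e - k' - 2) + 1) from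
          poch_eq_poch (by push_cast; ring) (by omega)]
      rw [poch_succ']
      rw [show poch (2*(N:ℚ) + ↑k' + 3 - 2*↑e - 2*↑i + 1) (2*e - k' - 2)
            = poch (2*(N:ℚ) + ↑k' + 4 - 2*e - 2*i) (2*e - k' - 2) from
          poch_eq_poch (by ring) rfl]
      rw [show poch (2*(N:ℚ) + ↑(k'+1) + 3 - 2*↑e - 2*↑i + ↑(0:ℕ)) (2*e - (k'+1) - 0 - 1)
            = poch (2*(N:ℚ) + ↑k' + 4 - 2*e - 2*i) (2*e - k' - 2) from
          poch_eq_poch (by push_cast; ring) (by omega)]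
      push_cast
      ring
    · rcases Nat.lt_or_ge m k' with hm | hm
      · -- 1 ≤ j = m+1 < k
        simp only [Hc, Nat.add_sub_cancel]
        -- LHS first poch
        rw [show poch ((e:ℚ) + ↑i - ↑(m+1) - ↑(k'+1) + 1/2 - ↑N) (N - 2*e + (m+1) + (k'+1) - 1)
              = poch (((e:ℚ) + ↑i - ↑(k'+1) + 1/2 - ↑N) - ↑(m+1)) ((N - 2*e + k') + (m+1)) from
            poch_eq_poch (by push_cast; ring) (by omega)]
        rw [poch_shift]
        rw [show (∏ s ∈ Finset.range (m+1), ((e:ℚ) + ↑i - ↑(k'+1) + 1/2 - ↑N - 1 - ↑s))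
              = ∏ s ∈ Finset.range (m+1), (-((N:ℚ) + ↑k' + 3/2 - ↑e - ↑i) - ↑s) from
            Finset.prod_congr rfl (fun s _ => by push_cast; ring)]
        rw [prod_neg, poch_succ']
        rw [show poch ((N:ℚ) + ↑k' + 3/2 - ↑e - ↑i + 1) m
              = poch ((N:ℚ) + ↑k' + 5/2 - ↑e - ↑i) m from poch_eq_poch (by ring) rfl]
        -- LHS second poch
        rw [show poch (2*(N:ℚ) + 2 - 2*↑e - 2*↑i + ↑(m+1) + ↑(k'+1)) (2*e - (m+1) - (k'+1))
              = poch (2*(N:ℚ) + ↑k' + ↑m + 4 - 2*↑e - 2*↑i) ((2*e - k' - m - 3) + 1) from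
            poch_eq_poch (by push_cast; ring) (by omega)]
        rw [poch_succ']
        rw [show poch (2*(N:ℚ) + ↑k' + ↑m + 4 - 2*↑e - 2*↑i + 1) (2*e - k' - m - 3)
              = poch (2*(N:ℚ) + ↑k' + ↑m + 5 - 2*↑e - 2*↑i) (2*e - k' - m - 3) from
            poch_eq_poch (by ring) rfl]
        -- RHS Hc(m+2) pochs
        rw [show poch ((e:ℚ) + ↑i - ↑(k'+1) + 1/2 - ↑N) (N - 2*e + (k'+1) - 1)
              = poch ((e:ℚ) + ↑i - ↑(k'+1) + 1/2 - ↑N) (N - 2*e + k') from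
            poch_eq_poch rfl (by omega)]
        rw [show poch ((N:ℚ) + ↑(k'+1) + 3/2 - ↑e - ↑i) (m+1)
              = poch ((N:ℚ) + ↑k' + 5/2 - ↑e - ↑i) (m+1) from
            poch_eq_poch (by push_cast; ring) rfl]
        rw [poch_succ]
        rw [show poch (2*(N:ℚ) + ↑(k'+1) + 3 - 2*↑e - 2*↑i + ↑(m+1)) (2*e - (k'+1) - (m+1) - 1)
              = poch (2*(N:ℚ) + ↑k' + ↑m + 5 - 2*↑e - 2*↑i) (2*e - k' - m - 3) from
            poch_eq_poch (by push_cast; ring) (by omega)]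
        -- RHS Hc(m+1) pochs
        rw [show poch ((N:ℚ) + ↑(k'+1) + 3/2 - ↑e - ↑i) m
              = poch ((N:ℚ) + ↑k' + 5/2 - ↑e - ↑i) m from
            poch_eq_poch (by push_cast; ring) rfl]
        rw [show poch (2*(N:ℚ) + ↑(k'+1) + 3 - 2*↑e - 2*↑i + ↑m) (2*e - (k'+1) - m - 1)
              = poch (2*(N:ℚ) + ↑k' + ↑m + 4 - 2*↑e - 2*↑i) ((2*e - k' - m - 3) + 1) from
            poch_eq_poch (by push_cast; ring) (by omega)]
        rw [poch_succ']
        rw [show poch (2*(N:ℚ) + ↑k' + ↑m + 4 - 2*↑e - 2*↑i + 1) (2*e - k' - m - 3)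
              = poch (2*(N:ℚ) + ↑k' + ↑m + 5 - 2*↑e - 2*↑i) (2*e - k' - m - 3) from
            poch_eq_poch (by ring) rfl]
        -- binomial relations
        have hmulq : ((k':ℚ) + 1) * (k'.choose m : ℚ)
            = ((k'+1).choose (m+1) : ℚ) * ((m:ℚ) + 1) := by
          exact_mod_cast Nat.add_one_mul_choose_eq k' m
        have hpas : ((k'+1).choose (m+1) : ℚ) = (k'.choose m : ℚ) + (k'.choose (m+1) : ℚ) := by
          exact_mod_cast Nat.choose_succ_succ k' m
        have hb : (k'.choose m : ℚ) = ((k'+1).choose (m+1) : ℚ) * ((m:ℚ) + 1) / ((k':ℚ) + 1) := by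
          rw [eq_div_iff (by positivity)]
          linear_combination hmulq
        have ha : (k'.choose (m+1) : ℚ)
            = ((k'+1).choose (m+1) : ℚ) * ((k':ℚ) - ↑m) / ((k':ℚ) + 1) := by
          rw [eq_div_iff (by positivity)]
          linear_combination (-((k':ℚ) + 1)) * hpas - hmulq
        rw [ha, hb]
        push_cast
        field_simp
        ring
      · -- j = k
        have hm' : m = k' := by omega
        subst hm'
        simp only [Hc, Nat.add_sub_cancel, Nat.choose_succ_self, Nat.cast_zero,
          Nat.choose_self, Nat.cast_one, mul_zero, zero_mul, zero_sub]
        rw [show poch ((e:ℚ) + ↑i - ↑(m+1) - ↑(m+1) + 1/2 - ↑N) (N - 2*e + (m+1) + (m+1) - 1)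
              = poch (((e:ℚ) + ↑i - ↑(m+1) + 1/2 - ↑N) - ↑(m+1)) ((N - 2*e + m) + (m+1)) from
            poch_eq_poch (by push_cast; ring) (by omega)]
        rw [poch_shift]
        rw [show (∏ s ∈ Finset.range (m+1), ((e:ℚ) + ↑i - ↑(m+1) + 1/2 - ↑N - 1 - ↑s))
              = ∏ s ∈ Finset.range (m+1), (-((N:ℚ) + ↑m + 3/2 - ↑e - ↑i) - ↑s) from
            Finset.prod_congr rfl (fun s _ => by push_cast; ring)]
        rw [prod_neg, poch_succ']
        rw [show poch ((N:ℚ) + ↑m + 3/2 - ↑e - ↑i + 1) m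
              = poch ((N:ℚ) + ↑m + 5/2 - ↑e - ↑i) m from poch_eq_poch (by ring) rfl]
        rw [show poch (2*(N:ℚ) + 2 - 2*↑e - 2*↑i + ↑(m+1) + ↑(m+1)) (2*e - (m+1) - (m+1))
              = poch (2*(N:ℚ) + ↑m + ↑m + 4 - 2*↑e - 2*↑i) (2*e - m - m - 2) from
            poch_eq_poch (by push_cast; ring) (by omega)]
        rw [show poch ((e:ℚ) + ↑i - ↑(m+1) + 1/2 - ↑N) (N - 2*e + (m+1) - 1)
              = poch ((e:ℚ) + ↑i - ↑(m+1) + 1/2 - ↑N) (N - 2*e + m) from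
            poch_eq_poch rfl (by omega)]
        rw [show poch ((N:ℚ) + ↑(m+1) + 3/2 - ↑e - ↑i) m
              = poch ((N:ℚ) + ↑m + 5/2 - ↑e - ↑i) m from
            poch_eq_poch (by push_cast; ring) rfl]
        rw [show poch (2*(N:ℚ) + ↑(m+1) + 3 - 2*↑e - 2*↑i + ↑m) (2*e - (m+1) - m - 1)
              = poch (2*(N:ℚ) + ↑m + ↑m + 4 - 2*↑e - 2*↑i) (2*e - m - m - 2) from
            poch_eq_poch (by push_cast; ring) (by omega)]
        push_cast
        ring
  rw [Finset.sum_congr rfl key, Finset.sum_range_sub (Hc N e (k'+1) i) (k'+1+1)]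
  have h2 : Hc N e (k'+1) i (k'+1+1) = 0 := by
    show _ * _ * ((k'+1-1).choose (k'+1) : ℚ) * _ * _ * _ * _ = 0
    rw [Nat.add_sub_cancel, Nat.choose_eq_zero_of_lt (by omega)]
    push_cast; ring
  rw [h2]
  show (0:ℚ) - 0 = 0
  ring
end
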